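/- arXiv:1807.03858 — 5 statements merged into one kernel-verified Lean document; each statement's English description precedes it below -/
import Mathlib

section
/- Let Π be a compact metric space (of policies) with metric d, let 𝓜 be a set (of models) containing a distinguished element M*, let V : Π × 𝓜 → ℝ be such that π ↦ V(π, M*) is continuous, and let D : Π × 𝓜 × Π → ℝ≥0, written D_{π_ref}(M, π), satisfy: (R1) V(π, M*) ≥ V(π, M) − D_{π_ref}(M, π) for all π_ref ∈ Π, M ∈ 𝓜 and all π with d(π, π_ref) ≤ δ; and (R2) D_{π_ref}(M*, π) = 0 for all π, π_ref. Fix δ > 0 and suppose a sequence (π_k, M_k) is generated by π_0 ∈ Π and, for each k, (π_{k+1}, M_{k+1}) is a maximizer of V(π, M) − D_{π_k}(M, π) over π ∈ Π, M ∈ 𝓜 subject to d(π, π_k) ≤ δ. Then V(π_0, M*) ≤ V(π_1, M*) ≤ ⋯ ≤ V(π_T, M*) for every T, and the values V(π_k, M*) converge to V(π̄, M*) for some π̄ ∈ Π that is a local maximum of π ↦ V(π, M*), i.e., there is an open d-ball around π̄ in which no policy has a strictly larger value under M*. -/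
/-!
Taking `M = M*` in the maximization step and using (R2), every policy within `δ` of `π_k` has true
value at most the surrogate optimum, which by (R1) is at most `V(π_{k+1}, M*)`. Hence the true
values increase, and by compactness some subsequence of policies converges to a `π̄`, whose value is
the limit of the whole monotone sequence. Once some `π_k` lies within `δ / 2` of `π̄`, the ball of
radius `δ / 2` around `π̄` sits inside the trust region of `π_k`, so no policy there beats
`V(π_{k+1}, M*) ≤ V(π̄, M*)`.
-/

open Filter Topology

def TrustRegionAscent {X : Type*} [MetricSpace X] (f : X → ℝ) (δ : ℝ) (x : ℕ → X) : Prop :=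
  ∀ k p, dist p (x k) ≤ δ → f p ≤ f (x (k + 1))

namespace TrustRegionAscent

variable {X : Type*} [MetricSpace X] {f : X → ℝ} {δ : ℝ} {x : ℕ → X}

theorem monotone (hx : TrustRegionAscent f δ x) (hδ : 0 ≤ δ) : Monotone fun k => f (x k) :=
  monotone_nat_of_le_succ fun k => hx k (x k) (by simpa using hδ)

theorem tendsto_of_tendsto_subseq (hx : TrustRegionAscent f δ x) (hδ : 0 ≤ δ) {φ : ℕ → ℕ}
    (hφ : StrictMono φ) {a : X} (hxa : Tendsto (x ∘ φ) atTop (𝓝 a)) (hf : ContinuousAt f a) :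
    Tendsto (fun k => f (x k)) atTop (𝓝 (f a)) :=
  (tendsto_iff_tendsto_subseq_of_monotone (hx.monotone hδ) hφ.tendsto_atTop).2
    (hf.tendsto.comp hxa)

theorem le_of_dist_lt_half (hx : TrustRegionAscent f δ x) {a : X}
    (hbound : ∀ k, f (x k) ≤ f a) {k : ℕ} (hk : dist (x k) a < δ / 2) {p : X}
    (hp : dist p a < δ / 2) : f p ≤ f a := by
  have hpk : dist p (x k) ≤ δ := by
    linarith [dist_triangle_right p (x k) a]
  exact (hx k p hpk).trans (hbound (k + 1))

theorem exists_tendsto_localMax [CompactSpace X] (hx : TrustRegionAscent f δ x)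
    (hf : Continuous f) (hδ : 0 < δ) :
    ∃ a, Tendsto (fun k => f (x k)) atTop (𝓝 (f a)) ∧ ∀ p, dist p a < δ / 2 → f p ≤ f a := by
  obtain ⟨a, φ, hφ, hxa⟩ := CompactSpace.tendsto_subseq x
  have hlim := hx.tendsto_of_tendsto_subseq hδ.le hφ hxa hf.continuousAt
  have hbound : ∀ k, f (x k) ≤ f a := (hx.monotone hδ.le).ge_of_tendsto hlim
  obtain ⟨j, hj⟩ := ((Metric.tendsto_nhds.mp hxa) (δ / 2) (half_pos hδ)).exists
  exact ⟨a, hlim, fun p hp => hx.le_of_dist_lt_half hbound hj hp⟩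

end TrustRegionAscent

theorem trustRegionAscent_of_maximizer {Pol Mod : Type*} [MetricSpace Pol] {Mstar : Mod}
    {V : Pol → Mod → ℝ} {D : Pol → Mod → Pol → ℝ} {δ : ℝ}
    (hR1 : ∀ πref M p, dist p πref ≤ δ → V p Mstar ≥ V p M - D πref M p)
    (hR2 : ∀ p πref, D πref Mstar p = 0) {πseq : ℕ → Pol} {Mseq : ℕ → Mod}
    (hstep : ∀ k, dist (πseq (k + 1)) (πseq k) ≤ δ ∧
      ∀ (p : Pol) (M : Mod), dist p (πseq k) ≤ δ →
        V p M - D (πseq k) M p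
          ≤ V (πseq (k + 1)) (Mseq (k + 1)) - D (πseq k) (Mseq (k + 1)) (πseq (k + 1))) :
    TrustRegionAscent (fun p => V p Mstar) δ πseq := by
  intro k p hp
  calc V p Mstar = V p Mstar - D (πseq k) Mstar p := by rw [hR2, sub_zero]
    _ ≤ V (πseq (k + 1)) (Mseq (k + 1)) - D (πseq k) (Mseq (k + 1)) (πseq (k + 1)) :=
      (hstep k).2 p Mstar hp
    _ ≤ V (πseq (k + 1)) Mstar := hR1 _ _ _ (hstep k).1

theorem meta_algorithm_monotone_and_local_max_general
    {Pol : Type*} [MetricSpace Pol] [CompactSpace Pol]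
    {Mod : Type*} (Mstar : Mod)
    (V : Pol → Mod → ℝ) (hVcont : Continuous fun p => V p Mstar)
    (D : Pol → Mod → Pol → ℝ)
    (δ : ℝ) (hδ : 0 < δ)
    -- (R1): the lower bound is valid in a δ-neighborhood of any reference policy
    (hR1 : ∀ πref M p, dist p πref ≤ δ → V p Mstar ≥ V p M - D πref M p)
    -- (R2): the discrepancy vanishes at the true model
    (hR2 : ∀ p πref, D πref Mstar p = 0)
    (πseq : ℕ → Pol) (Mseq : ℕ → Mod)
    -- at each iteration, (πseq (k+1), Mseq (k+1)) is a maximizer of the lower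
    -- bound over the trust region
    (hstep : ∀ k, dist (πseq (k + 1)) (πseq k) ≤ δ ∧
      ∀ (p : Pol) (M : Mod), dist p (πseq k) ≤ δ →
        V p M - D (πseq k) M p
          ≤ V (πseq (k + 1)) (Mseq (k + 1)) - D (πseq k) (Mseq (k + 1)) (πseq (k + 1))) :
    Monotone (fun k => V (πseq k) Mstar) ∧
    ∃ πbar : Pol,
      Filter.Tendsto (fun k => V (πseq k) Mstar) Filter.atTop (nhds (V πbar Mstar)) ∧
      ∃ ε > 0, ∀ p : Pol, dist p πbar < ε → V p Mstar ≤ V πbar Mstar := by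
  have hascent := trustRegionAscent_of_maximizer hR1 hR2 hstep
  obtain ⟨πbar, hlim, hlocal⟩ := hascent.exists_tendsto_localMax hVcont hδ
  exact ⟨hascent.monotone hδ.le, πbar, hlim, δ / 2, half_pos hδ, hlocal⟩

theorem meta_algorithm_monotone_and_local_max
    {Pol : Type*} [MetricSpace Pol] [CompactSpace Pol]
    {Mod : Type*} (Mstar : Mod)
    (V : Pol → Mod → ℝ) (hVcont : Continuous fun p => V p Mstar)
    (D : Pol → Mod → Pol → ℝ) (hDnonneg : ∀ πref M p, 0 ≤ D πref M p)
    (δ : ℝ) (hδ : 0 < δ)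
    -- (R1): the lower bound is valid in a δ-neighborhood of any reference policy
    (hR1 : ∀ πref M p, dist p πref ≤ δ → V p Mstar ≥ V p M - D πref M p)
    -- (R2): the discrepancy vanishes at the true model
    (hR2 : ∀ p πref, D πref Mstar p = 0)
    (πseq : ℕ → Pol) (Mseq : ℕ → Mod)
    -- at each iteration, (πseq (k+1), Mseq (k+1)) is a maximizer of the lower
    -- bound over the trust region
    (hstep : ∀ k, dist (πseq (k + 1)) (πseq k) ≤ δ ∧
      ∀ (p : Pol) (M : Mod), dist p (πseq k) ≤ δ →
        V p M - D (πseq k) M p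
          ≤ V (πseq (k + 1)) (Mseq (k + 1)) - D (πseq k) (Mseq (k + 1)) (πseq (k + 1))) :
    Monotone (fun k => V (πseq k) Mstar) ∧
    ∃ πbar : Pol,
      Filter.Tendsto (fun k => V (πseq k) Mstar) Filter.atTop (nhds (V πbar Mstar)) ∧
      ∃ ε > 0, ∀ p : Pol, dist p πbar < ε → V p Mstar ≤ V πbar Mstar :=
  meta_algorithm_monotone_and_local_max_general Mstar V hVcont D δ hδ hR1 hR2 πseq Mseq hstep
end

section
/- Let Π be a set (of policies) with a function d : Π × Π → ℝ≥0, let 𝓜 be a set (of models) containing M*, let V : Π × 𝓜 → ℝ, and let L, L̂ : Π × 𝓜 × Π → ℝ, written L^{π,M}_{π_ref} and L̂^{π,M}_{π_ref}, satisfy: (i) L^{π,M}_{π_ref} ≤ V(π, M*) whenever d(π, π_ref) ≤ δ; (ii) L^{π,M*}_{π_ref} = V(π, M*) for all π, π_ref; and (iii) |L̂^{π,M}_{π_ref} − L^{π,M}_{π_ref}| ≤ ε/4 for all π, M, π_ref. Suppose (π_{t+1}, M_{t+1}) maximizes L̂^{π,M}_{π_t} over π ∈ Π, M ∈ 𝓜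 subject to d(π, π_t) ≤ δ. If π_t is not a (δ, ε)-local maximum of π ↦ V(π, M*), i.e., there exists π′ ∈ Π with d(π′, π_t) ≤ δ and V(π′, M*) ≥ V(π_t, M*) + ε, then V(π_{t+1}, M*) ≥ V(π_t, M*) + ε/2. -/
/-!
The true model is feasible for the trust-region problem and its lower bound is exact, so the
competitor `(π', Mstar)` certifies an `Lhat`-value within `ε/4` of `V π' Mstar`. The maximizer
loses at most another `ε/4` passing from `Lhat` back to `L`, and `L` under-estimates the true
value inside the trust region; the total loss `ε/2` leaves half of the gap `ε`.
-/

theorem IsMaxOn.le_add_two_mul_of_abs_sub_le {α : Type*} {f g : α → ℝ} {s : Set α} {a b : α}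
    {η : ℝ} (hmax : IsMaxOn f s a) (hb : b ∈ s) (hfg : ∀ x, |f x - g x| ≤ η) :
    g b ≤ g a + 2 * η := by
  have ha := abs_le.mp (hfg a)
  have hb' := abs_le.mp (hfg b)
  have hab : f b ≤ f a := hmax hb
  linarith

theorem one_step_improvement_general
    {Pol : Type*} {Mod : Type*} (Mstar : Mod)
    (d : Pol → Pol → ℝ)
    (V : Pol → Mod → ℝ)
    (L Lhat : Pol → Mod → Pol → ℝ)
    (δ ε : ℝ)
    -- (i): L is a lower bound of the true value in the δ-neighborhood
    (hi : ∀ (p πref : Pol) (M : Mod), d p πref ≤ δ → L p M πref ≤ V p Mstar)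
    -- (ii): L is exact at the true model
    (hii : ∀ p πref : Pol, L p Mstar πref = V p Mstar)
    -- (iii): uniform convergence of the empirical estimate
    (hiii : ∀ (p πref : Pol) (M : Mod), |Lhat p M πref - L p M πref| ≤ ε / 4)
    (πt πt1 : Pol) (Mt1 : Mod)
    -- (πt1, Mt1) maximizes Lhat over the trust region around πt
    (hfeas : d πt1 πt ≤ δ)
    (hopt : ∀ (p : Pol) (M : Mod), d p πt ≤ δ → Lhat p M πt ≤ Lhat πt1 Mt1 πt)
    -- πt is not a (δ, ε)-local maximum of V(·, Mstar)
    (π' : Pol) (hπ'close : d π' πt ≤ δ) (hπ'gap : V π' Mstar ≥ V πt Mstar + ε) :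
    V πt1 Mstar ≥ V πt Mstar + ε / 2 := by
  have hmax : IsMaxOn (fun q : Pol × Mod => Lhat q.1 q.2 πt) {q | d q.1 πt ≤ δ} (πt1, Mt1) :=
    fun q hq => hopt q.1 q.2 hq
  have hL : L π' Mstar πt ≤ L πt1 Mt1 πt + 2 * (ε / 4) :=
    hmax.le_add_two_mul_of_abs_sub_le (b := (π', Mstar)) hπ'close fun q => hiii q.1 πt q.2
  calc V πt Mstar + ε / 2 ≤ V π' Mstar - 2 * (ε / 4) := by linarith
    _ = L π' Mstar πt - 2 * (ε / 4) := by rw [hii]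
    _ ≤ L πt1 Mt1 πt := by linarith
    _ ≤ V πt1 Mstar := hi πt1 πt Mt1 hfeas

theorem one_step_improvement
    {Pol : Type*} {Mod : Type*} (Mstar : Mod)
    (d : Pol → Pol → ℝ) (hd : ∀ p q, 0 ≤ d p q)
    (V : Pol → Mod → ℝ)
    (L Lhat : Pol → Mod → Pol → ℝ)
    (δ ε : ℝ)
    -- (i): L is a lower bound of the true value in the δ-neighborhood
    (hi : ∀ (p πref : Pol) (M : Mod), d p πref ≤ δ → L p M πref ≤ V p Mstar)
    -- (ii): L is exact at the true model
    (hii : ∀ p πref : Pol, L p Mstar πref = V p Mstar)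
    -- (iii): uniform convergence of the empirical estimate
    (hiii : ∀ (p πref : Pol) (M : Mod), |Lhat p M πref - L p M πref| ≤ ε / 4)
    (πt πt1 : Pol) (Mt1 : Mod)
    -- (πt1, Mt1) maximizes Lhat over the trust region around πt
    (hfeas : d πt1 πt ≤ δ)
    (hopt : ∀ (p : Pol) (M : Mod), d p πt ≤ δ → Lhat p M πt ≤ Lhat πt1 Mt1 πt)
    -- πt is not a (δ, ε)-local maximum of V(·, Mstar)
    (π' : Pol) (hπ'close : d π' πt ≤ δ) (hπ'gap : V π' Mstar ≥ V πt Mstar + ε) :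
    V πt1 Mstar ≥ V πt Mstar + ε / 2 :=
  one_step_improvement_general Mstar d V L Lhat δ ε hi hii hiii πt πt1 Mt1 hfeas hopt π' hπ'close
    hπ'gap
end

section
/- (Telescoping lemma) For any policy π and any two transition models M and M̂ (Markov kernels from S×A to S), V^{π,M̂} − V^{π,M} = (γ/(1−γ)) · E_{S ∼ ρ^{π,M}, A ∼ π(·|S)}[ G^{π,M̂}(S, A) ], where G^{π,M̂}(s,a) = E_{ŝ′∼M̂(·|s,a)}[V^{π,M̂}(ŝ′)] − E_{s′∼M(·|s,a)}[V^{π,M̂}(s′)]. -/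
/-!
STATEMENT 2 (Telescoping lemma).  For a policy `π` (Markov kernel from states
to actions) and two transition models `M`, `Mhat` (Markov kernels from
state-action pairs to states),
`V^{π,M̂} − V^{π,M} = (γ/(1−γ)) · E_{S ∼ ρ^{π,M}, A ∼ π(·|S)}[G^{π,M̂}(S,A)]`.
-/

open MeasureTheory ProbabilityTheory

noncomputable section

variable {S A : Type*} [MeasurableSpace S] [MeasurableSpace A]

/-- One step of the closed-loop dynamics: from state law `μ`, sample `s ∼ μ`,
`a ∼ π(·|s)`, and next state `s' ∼ M(·|s,a)`. -/
def step (π : Kernel S A) (M : Kernel (S × A) S) (μ : Measure S) : Measure S :=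
  μ.bind fun s => (π s).bind fun a => M (s, a)

/-- Law of the state at time `t`, starting from `μ₀`. -/
def stateLaw (π : Kernel S A) (M : Kernel (S × A) S) (μ₀ : Measure S) : ℕ → Measure S
  | 0 => μ₀
  | t + 1 => step π M (stateLaw π M μ₀ t)

/-- Value function `V^{π,M}(s)`: expected discounted total reward starting at `s`. -/
def valueFn (π : Kernel S A) (M : Kernel (S × A) S) (R : S × A → ℝ) (γ : ℝ) (s : S) : ℝ :=
  ∑' t : ℕ, γ ^ t * ∫ s', ∫ a, R (s', a) ∂(π s') ∂(stateLaw π M (Measure.dirac s) t)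

/-- Aggregate value `V^{π,M} = E_{S₀∼μ₀}[V^{π,M}(S₀)]`. -/
def value (π : Kernel S A) (M : Kernel (S × A) S) (R : S × A → ℝ) (γ : ℝ)
    (μ₀ : Measure S) : ℝ :=
  ∫ s, valueFn π M R γ s ∂μ₀

/-- Discounted state visitation distribution `ρ^{π,M} = (1−γ) Σ_t γ^t law(S_t)`. -/
def visitation (π : Kernel S A) (M : Kernel (S × A) S) (γ : ℝ) (μ₀ : Measure S) : Measure S :=
  Measure.sum fun t : ℕ => (ENNReal.ofReal ((1 - γ) * γ ^ t)) • stateLaw π M μ₀ t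

/-- `G^{π,M̂}(s,a) = E_{ŝ′∼M̂(·|s,a)}[V^{π,M̂}(ŝ′)] − E_{s′∼M(·|s,a)}[V^{π,M̂}(s′)]`. -/
def Gsa (π : Kernel S A) (Mhat M : Kernel (S × A) S) (R : S × A → ℝ) (γ : ℝ)
    (s : S) (a : A) : ℝ :=
  (∫ s', valueFn π Mhat R γ s' ∂(Mhat (s, a))) - ∫ s', valueFn π Mhat R γ s' ∂(M (s, a))


/-!
Write `V = V^{π,M̂}`, `r(s) = E_{a∼π(s)} R(s,a)`, `P` and `P̂` for the closed-loop transition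
kernels of `M` and `M̂`, and `Ḡ(s) = E_{a∼π(s)} G(s,a) = (P̂V)(s) - (PV)(s)`. The Bellman equation
for `M̂` reads `V = r + γ (P̂V) = r + γ (PV + Ḡ)`. Integrating it against the law `ν_t` of `S_t`
under `M`, and using `∫ PV dν_t = ∫ V dν_{t+1}`, the sequence `a_t = ∫ V dν_t` satisfies
`a_t = ∫ r dν_t + γ (a_{t+1} + ∫ Ḡ dν_t)`. Multiplying by `γ^t` and summing telescopes to
`V^{π,M̂} = a_0 = V^{π,M} + γ Σ_t γ^t ∫ Ḡ dν_t`, and the last sum is `(1-γ)⁻¹ ∫ Ḡ dρ^{π,M}`.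
-/

open MeasureTheory ProbabilityTheory

section Geometric

variable {γ C : ℝ}

lemma abs_pow_mul_le {a : ℝ} (hγ0 : 0 ≤ γ) (ha : |a| ≤ C) (t : ℕ) : |γ ^ t * a| ≤ γ ^ t * C := by
  rw [abs_mul, abs_pow, abs_of_nonneg hγ0]
  exact mul_le_mul_of_nonneg_left ha (pow_nonneg hγ0 t)

variable {a : ℕ → ℝ}

lemma summable_pow_mul_of_abs_le (hγ0 : 0 ≤ γ) (hγ1 : γ < 1) (ha : ∀ t, |a t| ≤ C) :
    Summable fun t => γ ^ t * a t :=
  ((summable_geometric_of_lt_one hγ0 hγ1).mul_right C).of_norm_bounded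
    fun t => (Real.norm_eq_abs _).trans_le (abs_pow_mul_le hγ0 (ha t) t)

lemma abs_tsum_pow_mul_le (hγ0 : 0 ≤ γ) (hγ1 : γ < 1) (ha : ∀ t, |a t| ≤ C) :
    |∑' t, γ ^ t * a t| ≤ C / (1 - γ) := by
  rw [div_eq_inv_mul]
  exact tsum_of_norm_bounded ((hasSum_geometric_of_lt_one hγ0 hγ1).mul_right C)
    fun t => (Real.norm_eq_abs _).trans_le (abs_pow_mul_le hγ0 (ha t) t)

lemma hasSum_pow_mul_sub_pow_succ_mul (hγ0 : 0 ≤ γ) (hγ1 : γ < 1) (ha : ∀ t, |a t| ≤ C) :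
    HasSum (fun t => γ ^ t * a t - γ ^ (t + 1) * a (t + 1)) (a 0) := by
  have h := (summable_pow_mul_of_abs_le hγ0 hγ1 ha).hasSum
  simpa using h.sub ((hasSum_nat_add_iff' 1).2 h)

lemma eq_tsum_add_tsum_of_recurrence {b c : ℕ → ℝ} {Cb Cc : ℝ} (hγ0 : 0 ≤ γ) (hγ1 : γ < 1)
    (ha : ∀ t, |a t| ≤ C) (hb : ∀ t, |b t| ≤ Cb) (hc : ∀ t, |c t| ≤ Cc)
    (h : ∀ t, a t = b t + γ * (a (t + 1) + c t)) :
    a 0 = ∑' t, γ ^ t * b t + γ * ∑' t, γ ^ t * c t := by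
  have hsum := hasSum_pow_mul_sub_pow_succ_mul hγ0 hγ1 ha
  have hterm : (fun t => γ ^ t * a t - γ ^ (t + 1) * a (t + 1))
      = fun t => γ ^ t * b t + γ * (γ ^ t * c t) := by
    funext t
    rw [h t]
    ring
  rw [hterm] at hsum
  rw [← hsum.tsum_eq, Summable.tsum_add (summable_pow_mul_of_abs_le hγ0 hγ1 hb)
    ((summable_pow_mul_of_abs_le hγ0 hγ1 hc).mul_left γ), tsum_mul_left]

end Geometric

section Integral

variable {α β : Type*} [MeasurableSpace α] [MeasurableSpace β] {f : α → ℝ} {C : ℝ}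

lemma integrable_of_abs_le (hf : Measurable f) (hfC : ∀ x, |f x| ≤ C) (μ : Measure α)
    [IsFiniteMeasure μ] : Integrable f μ :=
  .of_bound hf.aestronglyMeasurable C (ae_of_all μ fun x => (Real.norm_eq_abs _).trans_le (hfC x))

lemma abs_integral_le_of_abs_le (hfC : ∀ x, |f x| ≤ C) (μ : Measure α) [IsProbabilityMeasure μ] :
    |∫ x, f x ∂μ| ≤ C := by
  simpa using norm_integral_le_of_norm_le_const
    (ae_of_all μ fun x => (Real.norm_eq_abs (f x)).trans_le (hfC x))

lemma integral_norm_le_of_abs_le (hfC : ∀ x, |f x| ≤ C) (μ : Measure α)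
    [IsProbabilityMeasure μ] : ∫ x, ‖f x‖ ∂μ ≤ C :=
  (le_abs_self _).trans (abs_integral_le_of_abs_le (fun x => (abs_norm (f x)).trans_le (hfC x)) μ)

lemma Measure.integral_bind (κ : Kernel α β) (μ : Measure α) {g : β → ℝ}
    (hg : Integrable g (κ ∘ₘ μ)) : ∫ y, g y ∂(κ ∘ₘ μ) = ∫ x, ∫ y, g y ∂κ x ∂μ := by
  rw [Measure.comp_eq_comp_const_apply] at hg ⊢
  exact Kernel.integral_comp hg

lemma integrable_integral_kernel (κ : Kernel α β) [IsMarkovKernel κ] {g : β → ℝ}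
    (hg : Measurable g) (hgC : ∀ y, |g y| ≤ C) (μ : Measure α) [IsFiniteMeasure μ] :
    Integrable (fun x => ∫ y, g y ∂κ x) μ :=
  integrable_of_abs_le hg.stronglyMeasurable.integral_kernel.measurable
    (fun _ => abs_integral_le_of_abs_le hgC _) μ

lemma measurable_integral_sub_integral (κ η : Kernel α β) {g : β → ℝ} (hg : Measurable g) :
    Measurable fun x => ∫ y, g y ∂κ x - ∫ y, g y ∂η x :=
  hg.stronglyMeasurable.integral_kernel.measurable.sub
    hg.stronglyMeasurable.integral_kernel.measurable

lemma abs_integral_sub_integral_le (κ η : Kernel α β) [IsMarkovKernel κ] [IsMarkovKernel η]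
    {g : β → ℝ} (hgC : ∀ y, |g y| ≤ C) (x : α) :
    |∫ y, g y ∂κ x - ∫ y, g y ∂η x| ≤ C + C :=
  (abs_sub _ _).trans
    (add_le_add (abs_integral_le_of_abs_le hgC _) (abs_integral_le_of_abs_le hgC _))

lemma integral_sum_ofReal_smul {ν : ℕ → Measure α} [∀ t, IsProbabilityMeasure (ν t)]
    {w : ℕ → ℝ} (hw0 : ∀ t, 0 ≤ w t) (hw : Summable w) (hf : Measurable f)
    (hfC : ∀ x, |f x| ≤ C) :
    ∫ x, f x ∂(Measure.sum fun t => ENNReal.ofReal (w t) • ν t) = ∑' t, w t * ∫ x, f x ∂(ν t) := by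
  have hsmul : ∀ (g : α → ℝ) t, ∫ x, g x ∂(ENNReal.ofReal (w t) • ν t) = w t * ∫ x, g x ∂(ν t) :=
    fun g t => by rw [integral_smul_measure, ENNReal.toReal_ofReal (hw0 t), smul_eq_mul]
  have hint : Integrable f (Measure.sum fun t => ENNReal.ofReal (w t) • ν t) := by
    refine integrable_sum_measure
      (fun t => (integrable_of_abs_le hf hfC _).smul_measure ENNReal.ofReal_ne_top) ?_
    refine (hw.mul_right C).of_nonneg_of_le (fun t => integral_nonneg fun _ => norm_nonneg _)
      fun t => ?_
    rw [hsmul]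
    exact mul_le_mul_of_nonneg_left (integral_norm_le_of_abs_le hfC _) (hw0 t)
  rw [integral_sum_measure hint]
  exact tsum_congr (hsmul f)

end Integral

namespace ProbabilityTheory.Kernel

variable {α : Type*} [MeasurableSpace α] (κ : Kernel α α)

instance isMarkovKernel_pow [IsMarkovKernel κ] (n : ℕ) : IsMarkovKernel (κ ^ n) := by
  induction n with
  | zero => exact instIsMarkovKernelId
  | succ n ih => rw [pow_succ]; exact IsMarkovKernel.comp (κ ^ n) κ

lemma pow_succ_apply_eq_comp (n : ℕ) (x : α) : (κ ^ (n + 1)) x = ⇑(κ ^ n) ∘ₘ κ x := by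
  rw [pow_succ]
  exact comp_apply _ _ x

lemma pow_succ_comp (n : ℕ) (μ : Measure α) : ⇑(κ ^ (n + 1)) ∘ₘ μ = κ ∘ₘ (⇑(κ ^ n) ∘ₘ μ) := by
  rw [Measure.comp_assoc, pow_succ']
  rfl

lemma pow_zero_apply (x : α) : (κ ^ 0) x = Measure.dirac x := by
  rw [pow_zero]
  exact id_apply x

lemma pow_zero_comp (μ : Measure α) : ⇑(κ ^ 0) ∘ₘ μ = μ := by
  rw [pow_zero]
  exact Measure.id_comp

end ProbabilityTheory.Kernel

section DiscountedSum

variable {α : Type*} [MeasurableSpace α]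

def discountedSum (κ : Kernel α α) (f : α → ℝ) (γ : ℝ) (x : α) : ℝ :=
  ∑' t, γ ^ t * ∫ y, f y ∂(κ ^ t) x

variable (κ : Kernel α α) {f : α → ℝ} {C γ : ℝ}

lemma measurable_discountedSum (hf : Measurable f) : Measurable (discountedSum κ f γ) :=
  Measurable.tsum fun _ => hf.stronglyMeasurable.integral_kernel.measurable.const_mul _

variable [IsMarkovKernel κ]

lemma abs_discountedSum_le (hfC : ∀ x, |f x| ≤ C) (hγ0 : 0 ≤ γ) (hγ1 : γ < 1) (x : α) :
    |discountedSum κ f γ x| ≤ C / (1 - γ) :=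
  abs_tsum_pow_mul_le hγ0 hγ1 fun _ => abs_integral_le_of_abs_le hfC _

lemma integral_discountedSum (hf : Measurable f) (hfC : ∀ x, |f x| ≤ C) (hγ0 : 0 ≤ γ)
    (hγ1 : γ < 1) (μ : Measure α) [IsProbabilityMeasure μ] :
    ∫ x, discountedSum κ f γ x ∂μ = ∑' t, γ ^ t * ∫ y, f y ∂(⇑(κ ^ t) ∘ₘ μ) := by
  have hbound : ∀ t x, |γ ^ t * ∫ y, f y ∂(κ ^ t) x| ≤ γ ^ t * C :=
    fun t x => abs_pow_mul_le hγ0 (abs_integral_le_of_abs_le hfC _) t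
  have hint : ∀ t, Integrable (fun x => γ ^ t * ∫ y, f y ∂(κ ^ t) x) μ := fun t =>
    integrable_of_abs_le (hf.stronglyMeasurable.integral_kernel.measurable.const_mul _)
      (hbound t) μ
  have hnorm : Summable fun t => ∫ x, ‖γ ^ t * ∫ y, f y ∂(κ ^ t) x‖ ∂μ :=
    ((summable_geometric_of_lt_one hγ0 hγ1).mul_right C).of_nonneg_of_le
      (fun t => integral_nonneg fun _ => norm_nonneg _)
      fun t => integral_norm_le_of_abs_le (hbound t) μ
  unfold discountedSum
  rw [← integral_tsum_of_summable_integral_norm hint hnorm]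
  refine tsum_congr fun t => ?_
  rw [integral_const_mul, Measure.integral_bind _ _ (integrable_of_abs_le hf hfC _)]

lemma discountedSum_eq_add (hf : Measurable f) (hfC : ∀ x, |f x| ≤ C) (hγ0 : 0 ≤ γ)
    (hγ1 : γ < 1) (x : α) :
    discountedSum κ f γ x = f x + γ * ∫ y, discountedSum κ f γ y ∂κ x := by
  rw [integral_discountedSum κ hf hfC hγ0 hγ1, discountedSum,
    (summable_pow_mul_of_abs_le hγ0 hγ1 fun _ => abs_integral_le_of_abs_le hfC _).tsum_eq_zero_add,
    ← tsum_mul_left]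
  congr 1
  · rw [pow_zero, one_mul, Kernel.pow_zero_apply, integral_dirac' f x hf.stronglyMeasurable]
  · refine tsum_congr fun t => ?_
    rw [Kernel.pow_succ_apply_eq_comp]
    ring

lemma integral_eq_tsum_add_tsum_of_eq_add (κ' : Kernel α α) [IsMarkovKernel κ'] {v r : α → ℝ}
    {Cv Cr : ℝ} (hv : Measurable v) (hvC : ∀ x, |v x| ≤ Cv) (hr : Measurable r)
    (hrC : ∀ x, |r x| ≤ Cr) (hγ0 : 0 ≤ γ) (hγ1 : γ < 1) (h : ∀ x, v x = r x + γ * ∫ y, v y ∂κ' x)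
    (μ : Measure α) [IsProbabilityMeasure μ] :
    ∫ x, v x ∂μ = ∑' t, γ ^ t * ∫ x, r x ∂(⇑(κ ^ t) ∘ₘ μ)
      + γ * ∑' t, γ ^ t * ∫ x, (∫ y, v y ∂κ' x - ∫ y, v y ∂κ x) ∂(⇑(κ ^ t) ∘ₘ μ) := by
  have hgC := abs_integral_sub_integral_le κ' κ hvC
  have hstep : ∀ ν : Measure α, [IsProbabilityMeasure ν] →
      ∫ x, v x ∂ν = ∫ x, r x ∂ν
        + γ * (∫ x, v x ∂(κ ∘ₘ ν) + ∫ x, (∫ y, v y ∂κ' x - ∫ y, v y ∂κ x) ∂ν) := by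
    intro ν _
    have hbellman : ∫ x, v x ∂ν = ∫ x, r x ∂ν + γ * ∫ x, ∫ y, v y ∂κ' x ∂ν := by
      rw [integral_congr_ae (ae_of_all ν h), integral_add (integrable_of_abs_le hr hrC ν)
        ((integrable_integral_kernel κ' hv hvC ν).const_mul γ), integral_const_mul]
    have hgap : ∫ x, (∫ y, v y ∂κ' x - ∫ y, v y ∂κ x) ∂ν
        = ∫ x, ∫ y, v y ∂κ' x ∂ν - ∫ x, v x ∂(κ ∘ₘ ν) := by
      rw [integral_sub (integrable_integral_kernel κ' hv hvC ν)
        (integrable_integral_kernel κ hv hvC ν),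
        Measure.integral_bind _ _ (integrable_of_abs_le hv hvC _)]
    rw [hgap, hbellman]
    ring
  have key := eq_tsum_add_tsum_of_recurrence (a := fun t => ∫ x, v x ∂(⇑(κ ^ t) ∘ₘ μ)) hγ0 hγ1
    (fun _ => abs_integral_le_of_abs_le hvC _) (fun _ => abs_integral_le_of_abs_le hrC _)
    (fun _ => abs_integral_le_of_abs_le hgC _)
    fun t => by simp only [Kernel.pow_succ_comp]; exact hstep _
  simpa only [Kernel.pow_zero_comp] using key

end DiscountedSum

section Dynamics

variable {S A : Type*} [MeasurableSpace S] [MeasurableSpace A]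

def closedLoop (π : Kernel S A) (M : Kernel (S × A) S) : Kernel S S :=
  M ∘ₖ (Kernel.id ×ₖ π)

def expectedReward (π : Kernel S A) (R : S × A → ℝ) (s : S) : ℝ :=
  ∫ a, R (s, a) ∂π s

variable (π : Kernel S A) (M : Kernel (S × A) S) {R : S × A → ℝ} {C γ : ℝ}

instance [IsMarkovKernel π] [IsMarkovKernel M] : IsMarkovKernel (closedLoop π M) := by
  unfold closedLoop
  infer_instance

lemma closedLoop_apply [IsSFiniteKernel π] (s : S) : closedLoop π M s = M.sectR s ∘ₘ π s := by
  ext t ht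
  rw [closedLoop, Kernel.comp_apply, Kernel.prod_apply, Kernel.id_apply, Measure.dirac_prod,
    Measure.bind_apply ht (Kernel.aemeasurable _), Measure.bind_apply ht (Kernel.aemeasurable _),
    lintegral_map (M.measurable_coe ht) measurable_prodMk_left]
  rfl

lemma stateLaw_eq_comp [IsSFiniteKernel π] (μ : Measure S) (t : ℕ) :
    stateLaw π M μ t = ⇑(closedLoop π M ^ t) ∘ₘ μ := by
  induction t with
  | zero => exact (Kernel.pow_zero_comp _ μ).symm
  | succ t ih =>
    rw [Kernel.pow_succ_comp, ← ih, stateLaw, step]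
    congr 1
    funext s
    exact (closedLoop_apply π M s).symm

lemma valueFn_eq_discountedSum [IsSFiniteKernel π] :
    valueFn π M R γ = discountedSum (closedLoop π M) (expectedReward π R) γ := by
  funext s
  refine tsum_congr fun t => ?_
  rw [stateLaw_eq_comp, Measure.dirac_bind (Kernel.measurable _)]
  rfl

lemma measurable_expectedReward [IsSFiniteKernel π] (hR : Measurable R) :
    Measurable (expectedReward π R) :=
  hR.stronglyMeasurable.integral_kernel_prod_right'.measurable

lemma abs_expectedReward_le [IsMarkovKernel π] (hRC : ∀ x, |R x| ≤ C) (s : S) :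
    |expectedReward π R s| ≤ C :=
  abs_integral_le_of_abs_le (fun _ => hRC _) _

lemma measurable_valueFn [IsSFiniteKernel π] (hR : Measurable R) :
    Measurable (valueFn π M R γ) := by
  rw [valueFn_eq_discountedSum]
  exact measurable_discountedSum _ (measurable_expectedReward π hR)

variable [IsMarkovKernel π] [IsMarkovKernel M]

lemma abs_valueFn_le (hRC : ∀ x, |R x| ≤ C) (hγ0 : 0 ≤ γ) (hγ1 : γ < 1) (s : S) :
    |valueFn π M R γ s| ≤ C / (1 - γ) := by
  rw [valueFn_eq_discountedSum]
  exact abs_discountedSum_le _ (abs_expectedReward_le π hRC) hγ0 hγ1 s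

lemma valueFn_eq_add (hR : Measurable R) (hRC : ∀ x, |R x| ≤ C) (hγ0 : 0 ≤ γ) (hγ1 : γ < 1)
    (s : S) :
    valueFn π M R γ s = expectedReward π R s + γ * ∫ s', valueFn π M R γ s' ∂closedLoop π M s := by
  rw [valueFn_eq_discountedSum]
  exact discountedSum_eq_add _ (measurable_expectedReward π hR) (abs_expectedReward_le π hRC)
    hγ0 hγ1 s

lemma integral_sub_integral_eq_closedLoop (Mhat : Kernel (S × A) S) [IsMarkovKernel Mhat]
    {f : S → ℝ} (hf : Measurable f) (hfC : ∀ s, |f s| ≤ C) (s : S) :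
    ∫ a, (∫ s', f s' ∂Mhat (s, a) - ∫ s', f s' ∂M (s, a)) ∂π s
      = ∫ s', f s' ∂closedLoop π Mhat s - ∫ s', f s' ∂closedLoop π M s := by
  have hsect : ∀ (N : Kernel (S × A) S) [IsMarkovKernel N],
      Integrable (fun a => ∫ s', f s' ∂N (s, a)) (π s) ∧
        ∫ a, ∫ s', f s' ∂N (s, a) ∂π s = ∫ s', f s' ∂closedLoop π N s := by
    intro N _
    refine ⟨integrable_integral_kernel (N.sectR s) hf hfC _, ?_⟩
    rw [closedLoop_apply, Measure.integral_bind _ _ (integrable_of_abs_le hf hfC _)]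
    rfl
  rw [integral_sub (hsect Mhat).1 (hsect M).1, (hsect Mhat).2, (hsect M).2]

lemma value_eq_tsum (hR : Measurable R) (hRC : ∀ x, |R x| ≤ C) (hγ0 : 0 ≤ γ) (hγ1 : γ < 1)
    (μ₀ : Measure S) [IsProbabilityMeasure μ₀] :
    value π M R γ μ₀ = ∑' t, γ ^ t * ∫ s, expectedReward π R s ∂(⇑(closedLoop π M ^ t) ∘ₘ μ₀) := by
  rw [value, valueFn_eq_discountedSum]
  exact integral_discountedSum _ (measurable_expectedReward π hR) (abs_expectedReward_le π hRC)
    hγ0 hγ1 μ₀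

lemma integral_visitation {f : S → ℝ} (hf : Measurable f) (hfC : ∀ s, |f s| ≤ C) (hγ0 : 0 ≤ γ)
    (hγ1 : γ < 1) (μ₀ : Measure S) [IsProbabilityMeasure μ₀] :
    ∫ s, f s ∂(visitation π M γ μ₀)
      = ∑' t, (1 - γ) * γ ^ t * ∫ s, f s ∂(⇑(closedLoop π M ^ t) ∘ₘ μ₀) := by
  simp_rw [visitation, stateLaw_eq_comp]
  exact integral_sum_ofReal_smul (fun t => mul_nonneg (sub_nonneg.2 hγ1.le) (pow_nonneg hγ0 t))
    ((summable_geometric_of_lt_one hγ0 hγ1).mul_left _) hf hfC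

end Dynamics

theorem telescoping_lemma
    (π : Kernel S A) [IsMarkovKernel π]
    (M Mhat : Kernel (S × A) S) [IsMarkovKernel M] [IsMarkovKernel Mhat]
    (R : S × A → ℝ) (hRmeas : Measurable R) (C : ℝ) (hRbdd : ∀ x, |R x| ≤ C)
    (γ : ℝ) (hγ0 : 0 ≤ γ) (hγ1 : γ < 1)
    (μ₀ : Measure S) [IsProbabilityMeasure μ₀] :
    value π Mhat R γ μ₀ - value π M R γ μ₀ =
      γ / (1 - γ) *
        ∫ s, ∫ a, Gsa π Mhat M R γ s a ∂(π s) ∂(visitation π M γ μ₀) := by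
  have hV := measurable_valueFn π Mhat (γ := γ) hRmeas
  have hVC := abs_valueFn_le π Mhat hRbdd hγ0 hγ1
  have hvisit : ∫ s, ∫ a, Gsa π Mhat M R γ s a ∂(π s) ∂(visitation π M γ μ₀)
      = ∑' t, (1 - γ) * γ ^ t * ∫ s, (∫ s', valueFn π Mhat R γ s' ∂closedLoop π Mhat s
          - ∫ s', valueFn π Mhat R γ s' ∂closedLoop π M s) ∂(⇑(closedLoop π M ^ t) ∘ₘ μ₀) := by
    simp_rw [Gsa, integral_sub_integral_eq_closedLoop π M Mhat hV hVC]
    exact integral_visitation π M (measurable_integral_sub_integral _ _ hV)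
      (abs_integral_sub_integral_le _ _ hVC) hγ0 hγ1 μ₀
  rw [hvisit, value_eq_tsum π M hRmeas hRbdd hγ0 hγ1, value,
    integral_eq_tsum_add_tsum_of_eq_add (closedLoop π M) (closedLoop π Mhat) hV hVC
      (measurable_expectedReward π hRmeas) (abs_expectedReward_le π hRbdd) hγ0 hγ1
      (valueFn_eq_add π Mhat hRmeas hRbdd hγ0 hγ1) μ₀]
  simp_rw [mul_assoc (1 - γ)]
  rw [tsum_mul_left]
  field_simp [(sub_pos.2 hγ1).ne']
  ring
end
end

section
/- Let p and q be probability measures on the same measurable space with q ≪ p, and let f be a measurable function with ∫ f² dp < ∞ and f integrable with respect to both p and q. Then ( ∫ f dq − ∫ f dp )² ≤ χ²(q, p) · ∫ f² dp. -/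
/-!
Write `r = dq/dp`, so that `∫ f dq - ∫ f dp = ∫ f (r - 1) dp`. Since `∫ r dp = 1`, expanding
the square gives `χ²(q, p) = ∫ (r - 1)² dp`. The inequality is then Cauchy–Schwarz
for `f` and `r - 1` in `L²(p)`, carried out in `ℝ≥0∞` so that it also covers `χ²(q, p) = ∞`.
-/

open MeasureTheory
open scoped ENNReal

noncomputable section

open Classical in
/-- χ² divergence: `χ²(p,q) = ∫ (dp/dq)² dq − 1` if `p ≪ q`, `∞` otherwise. -/
def chiSq {α : Type*} [MeasurableSpace α] (p q : Measure α) : ℝ≥0∞ :=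
  if p ≪ q then (∫⁻ x, p.rnDeriv q x ^ 2 ∂q) - 1 else ⊤

lemma ENNReal.ofReal_sq_eq_enorm_sq (a : ℝ) : ENNReal.ofReal (a ^ 2) = ‖a‖ₑ ^ 2 := by
  rw [← enorm_pow, Real.enorm_of_nonneg (sq_nonneg a)]

/-- `a² - 1 = (a - 1)² + 2 (a - 1)`, rearranged so that no subtraction occurs in `ℝ≥0∞`. -/
lemma ENNReal.ofReal_sq_add_one_eq (a : ℝ) (ha : 0 ≤ a) :
    ENNReal.ofReal a ^ 2 + 1 = ‖a - 1‖ₑ ^ 2 + 2 * ENNReal.ofReal a := by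
  rw [← ENNReal.ofReal_sq_eq_enorm_sq, ← ENNReal.ofReal_pow ha, ← ENNReal.ofReal_one,
    ← ENNReal.ofReal_add (sq_nonneg a) zero_le_one, ← ENNReal.ofReal_ofNat 2,
    ← ENNReal.ofReal_mul zero_le_two, ← ENNReal.ofReal_add (sq_nonneg _) (by positivity)]
  congr 1
  ring

section

variable {α : Type*} [MeasurableSpace α] {μ : Measure α}

lemma ofReal_integral_sq_eq_lintegral_enorm_sq {f : α → ℝ}
    (hf2 : Integrable (fun x => f x ^ 2) μ) :
    ENNReal.ofReal (∫ x, f x ^ 2 ∂μ) = ∫⁻ x, ‖f x‖ₑ ^ 2 ∂μ := by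
  rw [ofReal_integral_eq_lintegral_ofReal hf2 (ae_of_all _ fun x => sq_nonneg (f x))]
  simp only [ENNReal.ofReal_sq_eq_enorm_sq]

lemma ENNReal.lintegral_mul_sq_le {f g : α → ℝ≥0∞} (hf : AEMeasurable f μ) (hg : AEMeasurable g μ) :
    (∫⁻ x, f x * g x ∂μ) ^ 2 ≤ (∫⁻ x, f x ^ 2 ∂μ) * ∫⁻ x, g x ^ 2 ∂μ := by
  have holder := ENNReal.lintegral_mul_le_Lp_mul_Lq μ Real.HolderConjugate.two_two hf hg
  simp only [Pi.mul_apply, ENNReal.rpow_two] at holder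
  calc (∫⁻ x, f x * g x ∂μ) ^ 2
      ≤ ((∫⁻ x, f x ^ 2 ∂μ) ^ (1 / 2 : ℝ) * (∫⁻ x, g x ^ 2 ∂μ) ^ (1 / 2 : ℝ)) ^ 2 :=
        pow_le_pow_left' holder 2
    _ = (∫⁻ x, f x ^ 2 ∂μ) * ∫⁻ x, g x ^ 2 ∂μ := by
        rw [mul_pow, ← ENNReal.rpow_mul_natCast, ← ENNReal.rpow_mul_natCast]
        norm_num

end

section

variable {α : Type*} [MeasurableSpace α] {p q : Measure α}

lemma integral_sub_integral_eq_integral_mul_rnDeriv_sub_one [SigmaFinite q]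
    [q.HaveLebesgueDecomposition p] (hqp : q ≪ p)
    {f : α → ℝ} (hfp : Integrable f p) (hfq : Integrable f q) :
    ∫ x, f x ∂q - ∫ x, f x ∂p = ∫ x, f x * ((q.rnDeriv p x).toReal - 1) ∂p := by
  rw [← integral_rnDeriv_smul hqp,
    ← integral_sub ((integrable_rnDeriv_smul_iff hqp).2 hfq) hfp]
  congr 1 with x
  rw [smul_eq_mul]
  ring

lemma chiSq_eq_lintegral_enorm_rnDeriv_sub_one_sq [IsProbabilityMeasure p]
    [IsProbabilityMeasure q] (hqp : q ≪ p) :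
    chiSq q p = ∫⁻ x, ‖(q.rnDeriv p x).toReal - 1‖ₑ ^ 2 ∂p := by
  have expand : ∫⁻ x, q.rnDeriv p x ^ 2 ∂p + 1
      = ∫⁻ x, ‖(q.rnDeriv p x).toReal - 1‖ₑ ^ 2 ∂p + 2 * ∫⁻ x, q.rnDeriv p x ∂p := by
    rw [← lintegral_const_mul _ (Measure.measurable_rnDeriv q p),
      ← lintegral_add_right' _ ((Measure.measurable_rnDeriv q p).aemeasurable.const_mul 2)]
    conv_lhs =>
      rw [← measure_univ (μ := p), ← lintegral_one, ← lintegral_add_right _ measurable_const]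
    refine lintegral_congr_ae ?_
    filter_upwards [Measure.rnDeriv_lt_top q p] with x hx
    simpa only [ENNReal.ofReal_toReal hx.ne] using
      ENNReal.ofReal_sq_add_one_eq _ (q.rnDeriv p x).toReal_nonneg
  rw [Measure.lintegral_rnDeriv hqp, measure_univ, mul_one] at expand
  have cancel_one : ∫⁻ x, q.rnDeriv p x ^ 2 ∂p
      = ∫⁻ x, ‖(q.rnDeriv p x).toReal - 1‖ₑ ^ 2 ∂p + 1 := by
    refine (ENNReal.add_left_inj ENNReal.one_ne_top).1 ?_
    rw [expand, add_assoc, one_add_one_eq_two]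
  rw [chiSq, if_pos hqp, cancel_one, ENNReal.add_sub_cancel_right ENNReal.one_ne_top]

end

theorem sq_integral_diff_le_chiSq_mul_general
    {α : Type*} [MeasurableSpace α] (p q : Measure α)
    [IsProbabilityMeasure p] [IsProbabilityMeasure q] (hqp : q ≪ p)
    (f : α → ℝ)
    (hfp : Integrable f p) (hfq : Integrable f q)
    (hf2 : Integrable (fun x => f x ^ 2) p) :
    ENNReal.ofReal ((∫ x, f x ∂q - ∫ x, f x ∂p) ^ 2)
      ≤ chiSq q p * ENNReal.ofReal (∫ x, f x ^ 2 ∂p) := by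
  set r : α → ℝ := fun x => (q.rnDeriv p x).toReal - 1
  have hr : AEMeasurable (fun x => ‖r x‖ₑ) p :=
    ((Measure.measurable_rnDeriv q p).ennreal_toReal.sub_const 1).enorm.aemeasurable
  calc ENNReal.ofReal ((∫ x, f x ∂q - ∫ x, f x ∂p) ^ 2)
      = ‖∫ x, f x * r x ∂p‖ₑ ^ 2 := by
        rw [integral_sub_integral_eq_integral_mul_rnDeriv_sub_one hqp hfp hfq,
          ENNReal.ofReal_sq_eq_enorm_sq]
    _ ≤ (∫⁻ x, ‖f x‖ₑ * ‖r x‖ₑ ∂p) ^ 2 := by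
        simp_rw [← enorm_mul]
        exact pow_le_pow_left' (enorm_integral_le_lintegral_enorm _) 2
    _ ≤ (∫⁻ x, ‖f x‖ₑ ^ 2 ∂p) * ∫⁻ x, ‖r x‖ₑ ^ 2 ∂p :=
        ENNReal.lintegral_mul_sq_le hfp.aestronglyMeasurable.enorm hr
    _ = chiSq q p * ENNReal.ofReal (∫ x, f x ^ 2 ∂p) := by
        rw [chiSq_eq_lintegral_enorm_rnDeriv_sub_one_sq hqp,
          ofReal_integral_sq_eq_lintegral_enorm_sq hf2, mul_comm]

theorem sq_integral_diff_le_chiSq_mul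
    {α : Type*} [MeasurableSpace α] (p q : Measure α)
    [IsProbabilityMeasure p] [IsProbabilityMeasure q] (hqp : q ≪ p)
    (f : α → ℝ) (hf : Measurable f)
    (hfp : Integrable f p) (hfq : Integrable f q)
    (hf2 : Integrable (fun x => f x ^ 2) p) :
    ENNReal.ofReal ((∫ x, f x ∂q - ∫ x, f x ∂p) ^ 2)
      ≤ chiSq q p * ENNReal.ofReal (∫ x, f x ^ 2 ∂p) :=
  sq_integral_diff_le_chiSq_mul_general p q hqp f hfp hfq hf2

end
end

section
/- Let P and P′ be column-stochastic matrices indexed by a finite state space, γ ∈ [0,1), Δ = γ(P′ − P), G = (Id − γP)⁻¹, G′ = (Id − γP′)⁻¹, and let μ be a probability vector. Set d = (1−γ) G μ and d′ = (1−γ) G′ μ (both probability vectors). Then ‖d − d′‖₁ ≤ (1−γ)^{-1} ‖Δ d‖₁. -/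
/-!
Write `A = 1 - γP` and `B = 1 - γP'`. Since `γP'` is an `ℓ¹`-contraction by the factor `γ`,
`‖B y‖₁ ≥ (1 - γ) ‖y‖₁` for every `y` (so `B`, and likewise `A`, is invertible). Applied to
`y = d' - d`, for which `B y = (1 - γ) μ - B d = A d - B d = Δ d`, this is the claimed bound.
-/

open Matrix

namespace Matrix

variable {n : Type*} [Fintype n]

theorem sum_abs_mulVec_le {A : Matrix n n ℝ} (hA : ∀ i j, 0 ≤ A i j)
    (hcol : ∀ j, ∑ i, A i j ≤ 1) (v : n → ℝ) :
    ∑ i, |(A *ᵥ v) i| ≤ ∑ i, |v i| :=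
  calc ∑ i, |(A *ᵥ v) i| ≤ ∑ i, ∑ j, A i j * |v j| := by
        refine Finset.sum_le_sum fun i _ => (Finset.abs_sum_le_sum_abs _ _).trans_eq ?_
        simp only [abs_mul, abs_of_nonneg (hA i _)]
    _ = ∑ j, (∑ i, A i j) * |v j| := by
        rw [Finset.sum_comm]
        simp only [Finset.sum_mul]
    _ ≤ ∑ j, |v j| :=
        Finset.sum_le_sum fun j _ => mul_le_of_le_one_left (abs_nonneg _) (hcol j)

theorem one_sub_mul_sum_abs_le_sum_abs_one_sub_smul_mulVec [DecidableEq n]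
    {A : Matrix n n ℝ} (hA : ∀ i j, 0 ≤ A i j) (hcol : ∀ j, ∑ i, A i j ≤ 1)
    {γ : ℝ} (hγ : 0 ≤ γ) (y : n → ℝ) :
    (1 - γ) * ∑ i, |y i| ≤ ∑ i, |((1 - γ • A) *ᵥ y) i| := by
  have hpoint : ∀ i, |y i| - γ * |(A *ᵥ y) i| ≤ |((1 - γ • A) *ᵥ y) i| := fun i => by
    have h := abs_sub_abs_le_abs_sub (y i) (γ * (A *ᵥ y) i)
    rw [abs_mul, abs_of_nonneg hγ] at h
    simpa only [sub_mulVec, one_mulVec, smul_mulVec, Pi.sub_apply, Pi.smul_apply,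
      smul_eq_mul] using h
  have hsum := Finset.sum_le_sum fun i (_ : i ∈ Finset.univ) => hpoint i
  rw [Finset.sum_sub_distrib, ← Finset.mul_sum] at hsum
  nlinarith [sum_abs_mulVec_le hA hcol y]

theorem isUnit_det_one_sub_smul [DecidableEq n]
    {A : Matrix n n ℝ} (hA : ∀ i j, 0 ≤ A i j) (hcol : ∀ j, ∑ i, A i j ≤ 1)
    {γ : ℝ} (hγ0 : 0 ≤ γ) (hγ1 : γ < 1) :
    IsUnit (1 - γ • A).det := by
  refine isUnit_iff_ne_zero.mpr fun hdet => ?_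
  obtain ⟨y, hy, hker⟩ := exists_mulVec_eq_zero_iff.mpr hdet
  have hle := one_sub_mul_sum_abs_le_sum_abs_one_sub_smul_mulVec hA hcol hγ0 y
  simp only [hker, Pi.zero_apply, abs_zero, Finset.sum_const_zero] at hle
  have hsum : ∑ i, |y i| = 0 :=
    le_antisymm (nonpos_of_mul_nonpos_right hle (by linarith))
      (Finset.sum_nonneg fun i _ => abs_nonneg _)
  refine hy (funext fun i => abs_eq_zero.mp ?_)
  exact (Finset.sum_eq_zero_iff_of_nonneg fun i _ => abs_nonneg _).mp hsum i
    (Finset.mem_univ i)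

theorem mulVec_inv_mulVec_sub_inv_mulVec [DecidableEq n] {A B : Matrix n n ℝ}
    (hA : IsUnit A.det) (hB : IsUnit B.det) (x : n → ℝ) :
    B *ᵥ (B⁻¹ *ᵥ x - A⁻¹ *ᵥ x) = (A - B) *ᵥ (A⁻¹ *ᵥ x) := by
  rw [mulVec_sub, sub_mulVec, mulVec_mulVec, mulVec_mulVec, mulVec_mulVec, mul_nonsing_inv B hB,
    mul_nonsing_inv A hA]

end Matrix

theorem visitation_l1_perturbation_bound_general
    {n : Type*} [Fintype n] [DecidableEq n]
    (P P' : Matrix n n ℝ) (γ : ℝ) (hγ0 : 0 ≤ γ) (hγ1 : γ < 1)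
    (hPnonneg : ∀ i j, 0 ≤ P i j) (hPcol : ∀ j, ∑ i, P i j = 1)
    (hP'nonneg : ∀ i j, 0 ≤ P' i j) (hP'col : ∀ j, ∑ i, P' i j = 1)
    (μ : n → ℝ) :
    ∑ i, |((1 - γ) • ((1 - γ • P)⁻¹).mulVec μ) i
            - ((1 - γ) • ((1 - γ • P')⁻¹).mulVec μ) i|
      ≤ (1 - γ)⁻¹ *
          ∑ i, |(γ • (P' - P)).mulVec ((1 - γ) • ((1 - γ • P)⁻¹).mulVec μ) i| := by
  set d := (1 - γ) • (1 - γ • P)⁻¹ *ᵥ μ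
  set d' := (1 - γ) • (1 - γ • P')⁻¹ *ᵥ μ
  have hA := isUnit_det_one_sub_smul hPnonneg (fun j => (hPcol j).le) hγ0 hγ1
  have hB := isUnit_det_one_sub_smul hP'nonneg (fun j => (hP'col j).le) hγ0 hγ1
  have hperturb : (1 - γ • P') *ᵥ (d' - d) = (γ • (P' - P)) *ᵥ d := by
    have hdiff : (1 - γ • P) - (1 - γ • P') = γ • (P' - P) := by
      rw [smul_sub]; abel
    simp only [d, d', ← mulVec_smul, mulVec_inv_mulVec_sub_inv_mulVec hA hB, hdiff]
  have hbound := one_sub_mul_sum_abs_le_sum_abs_one_sub_smul_mulVec hP'nonneg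
    (fun j => (hP'col j).le) hγ0 (d' - d)
  rw [hperturb] at hbound
  rw [le_inv_mul_iff₀ (by linarith)]
  simpa only [Pi.sub_apply, abs_sub_comm] using hbound

theorem visitation_l1_perturbation_bound
    {n : Type*} [Fintype n] [DecidableEq n]
    (P P' : Matrix n n ℝ) (γ : ℝ) (hγ0 : 0 ≤ γ) (hγ1 : γ < 1)
    (hPnonneg : ∀ i j, 0 ≤ P i j) (hPcol : ∀ j, ∑ i, P i j = 1)
    (hP'nonneg : ∀ i j, 0 ≤ P' i j) (hP'col : ∀ j, ∑ i, P' i j = 1)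
    (μ : n → ℝ) (hμnonneg : ∀ i, 0 ≤ μ i) (hμsum : ∑ i, μ i = 1) :
    ∑ i, |((1 - γ) • ((1 - γ • P)⁻¹).mulVec μ) i
            - ((1 - γ) • ((1 - γ • P')⁻¹).mulVec μ) i|
      ≤ (1 - γ)⁻¹ *
          ∑ i, |(γ • (P' - P)).mulVec ((1 - γ) • ((1 - γ • P)⁻¹).mulVec μ) i| :=
  visitation_l1_perturbation_bound_general P P' γ hγ0 hγ1 hPnonneg hPcol hP'nonneg hP'col μ
end
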